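/- arXiv:1701.04942 — 4 statements merged into one kernel-verified Lean document; each statement's English description precedes it below -/
import Mathlib

section
/- Let G be a finite abelian group and H ⊆ G a subgroup such that exp(G) = exp(H) · exp(G/H). Then 𝔰(G) ≤ exp(G/H) · (𝔰(H) − 1) + 𝔰(G/H). -/
/-!
Partition a long sequence in `G` greedily into blocks of length `exp(G/H)` whose sums lie
in `H`: as long as at least `𝔰(G/H)` terms remain, the EGZ property of `G/H` produces one
more block. With `exp(G/H) · (𝔰(H) - 1) + 𝔰(G/H)` terms one gets `𝔰(H)` blocks; the EGZ
property of `H`, applied to the block sums, selects `exp(H)` of them with total sum zero,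
and their union has length `exp(H) · exp(G/H) = exp(G)`.
-/

/-- The Erdős–Ginzburg–Ziv constant of an abelian group `G`: the smallest `k` such that
every multiset of elements of `G` of cardinality `k` contains a sub-multiset of
cardinality `exp(G)` summing to zero. -/
noncomputable def EGZ (G : Type*) [AddCommMonoid G] : ℕ :=
  sInf {k | ∀ S : Multiset G, Multiset.card S = k →
    ∃ T ≤ S, Multiset.card T = AddMonoid.exponent G ∧ T.sum = 0}

namespace Multiset

variable {α β : Type*}

theorem exists_le_card_eq {s : Multiset α} {n : ℕ} (h : n ≤ card s) :
    ∃ t ≤ s, card t = n := by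
  refine ⟨(s.toList.take n : List α), ?_, by simpa using h⟩
  conv_rhs => rw [← s.coe_toList]
  exact (s.toList.take_sublist n).subperm

theorem exists_le_map_eq_of_le_map {f : α → β} {s : Multiset α} {t : Multiset β}
    (h : t ≤ s.map f) : ∃ u ≤ s, u.map f = t := by
  induction s using Quotient.inductionOn
  induction t using Quotient.inductionOn
  obtain ⟨l, hperm, hsub⟩ := h
  obtain ⟨u, hu, rfl⟩ := List.sublist_map_iff.mp hsub
  exact ⟨u, hu.subperm, Quotient.sound hperm⟩

theorem exists_lt_count_of_card_mul_lt [Fintype α] [DecidableEq α] {s : Multiset α} {n : ℕ}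
    (h : Fintype.card α * n < card s) : ∃ a, n < count a s := by
  by_contra! hle
  have : card s ≤ Fintype.card α * n := calc
    card s = ∑ a, count a s := (sum_count_eq_card fun a _ => Finset.mem_univ a).symm
    _ ≤ ∑ _a : α, n := Finset.sum_le_sum fun a _ => hle a
    _ = Fintype.card α * n := by simp
  omega

theorem join_le_join {S T : Multiset (Multiset α)} (h : S ≤ T) : S.join ≤ T.join := by
  obtain ⟨U, rfl⟩ := le_iff_exists_add.mp h
  simp

theorem card_join_of_forall_card_eq {S : Multiset (Multiset α)} {m : ℕ}
    (h : ∀ t ∈ S, card t = m) : card S.join = card S * m := by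
  rw [card_join, map_congr rfl h, map_const', sum_replicate, smul_eq_mul]

end Multiset

open Multiset AddMonoid

section EGZ

variable {K : Type*} [AddCommGroup K] [Finite K]

theorem EGZ_set_nonempty :
    {k | ∀ S : Multiset K, card S = k →
      ∃ T ≤ S, card T = exponent K ∧ T.sum = 0}.Nonempty := by
  classical
  have := Fintype.ofFinite K
  have hexp : exponent K ≠ 0 := exponent_ne_zero_of_finite
  refine ⟨Fintype.card K * (exponent K - 1) + 1, fun S hS => ?_⟩
  obtain ⟨a, ha⟩ := exists_lt_count_of_card_mul_lt (s := S) (n := exponent K - 1) (by omega)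
  refine ⟨replicate (exponent K) a, le_count_iff_replicate_le.mp (by omega),
    card_replicate _ _, ?_⟩
  rw [sum_replicate, exponent_nsmul_eq_zero]

theorem exists_le_card_eq_exponent_sum_eq_zero {S : Multiset K} (h : EGZ K ≤ card S) :
    ∃ T ≤ S, card T = exponent K ∧ T.sum = 0 := by
  obtain ⟨S', hS'S, hS'⟩ := exists_le_card_eq h
  obtain ⟨T, hTS', hT⟩ := Nat.sInf_mem EGZ_set_nonempty S' hS'
  exact ⟨T, hTS'.trans hS'S, hT⟩

end EGZ

theorem AddSubgroup.exists_le_card_eq_exponent_sum_eq_zero {G : Type*} [AddCommGroup G]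
    (H : AddSubgroup G) [Finite H] {S : Multiset G} (hSH : ∀ x ∈ S, x ∈ H)
    (h : EGZ H ≤ card S) : ∃ T ≤ S, card T = exponent H ∧ T.sum = 0 := by
  lift S to Multiset H using hSH
  obtain ⟨T, hTS, hcard, hsum⟩ :=
    _root_.exists_le_card_eq_exponent_sum_eq_zero (by simpa using h)
  refine ⟨T.map (↑), map_le_map hTS, by rw [card_map, hcard], ?_⟩
  rw [← H.coe_subtype, ← map_multiset_sum, hsum, _root_.map_zero]

-- The hypothesis says `(j - 1) * exponent Q + EGZ Q ≤ card S` without truncated subtraction.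
theorem exists_zero_sum_blocks {G Q : Type*} [AddCommGroup G] [AddCommGroup Q] [Finite Q]
    (f : G →+ Q) (j : ℕ) {S : Multiset G}
    (h : j * exponent Q + EGZ Q ≤ card S + exponent Q) :
    ∃ B : Multiset (Multiset G), card B = j ∧ B.join ≤ S ∧
      ∀ T ∈ B, card T = exponent Q ∧ f T.sum = 0 := by
  classical
  induction j generalizing S with
  | zero => exact ⟨0, rfl, by simp, by simp⟩
  | succ j ih =>
    rw [Nat.succ_mul] at h
    obtain ⟨U, hUS, hUcard, hUsum⟩ :=
      exists_le_card_eq_exponent_sum_eq_zero (S := S.map f) (by rw [card_map]; omega)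
    obtain ⟨T, hTS, rfl⟩ := exists_le_map_eq_of_le_map hUS
    rw [card_map] at hUcard
    rw [← map_multiset_sum] at hUsum
    obtain ⟨B, hBcard, hBS, hB⟩ := ih (S := S - T) (by
      rw [card_sub hTS, hUcard]
      have := card_le_card hTS
      omega)
    refine ⟨T ::ₘ B, by simp [hBcard], ?_, ?_⟩
    · rw [join_cons]
      calc T + B.join ≤ T + (S - T) := add_le_add_right hBS T
        _ = S := add_tsub_cancel_of_le hTS
    · simpa [hUcard, hUsum] using hB

theorem stmt_5 (G : Type*) [AddCommGroup G] [Fintype G] (H : AddSubgroup G)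
    (hexp : AddMonoid.exponent G =
      AddMonoid.exponent H * AddMonoid.exponent (G ⧸ H)) :
    EGZ G ≤ AddMonoid.exponent (G ⧸ H) * (EGZ H - 1) + EGZ (G ⧸ H) := by
  set m := exponent (G ⧸ H)
  refine Nat.sInf_le fun S hS => ?_
  have hroom : EGZ H * m + EGZ (G ⧸ H) ≤ card S + m := calc
    EGZ H * m + EGZ (G ⧸ H) ≤ m * (EGZ H - 1 + 1) + EGZ (G ⧸ H) := by
      rw [mul_comm]; gcongr; omega
    _ = card S + m := by rw [hS]; ring
  obtain ⟨B, hBcard, hBS, hB⟩ := exists_zero_sum_blocks (QuotientAddGroup.mk' H) _ hroom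
  obtain ⟨V, hVB, hVcard, hVsum⟩ := H.exists_le_card_eq_exponent_sum_eq_zero (S := B.map sum)
    (by simpa [QuotientAddGroup.eq_zero_iff] using fun T hT => (hB T hT).2) (by simp [hBcard])
  obtain ⟨C, hCB, rfl⟩ := exists_le_map_eq_of_le_map hVB
  refine ⟨C.join, (join_le_join hCB).trans hBS, ?_, by rw [sum_join, hVsum]⟩
  rw [card_join_of_forall_card_eq fun T hT => (hB T (mem_of_le hCB hT)).1, ← card_map sum,
    hVcard, hexp]
end

section
/- Let G be a non-trivial finite abelian group, and suppose G ≅ G₁ × ⋯ × G_m where the exponents exp(G₁), …, exp(G_m) are pairwise relatively prime. Then 𝔰(G) ≤ Σ_{i=1}^{m} exp(G₁) ⋯ exp(G_{i−1}) · 𝔰(G_i), where the empty product for i = 1 is 1. -/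
/-!
For `G × H` with coprime exponents, take a multiset of `s + exp(G) · t` elements, where every
`s` elements of `G` and every `t` elements of `H` contain a zero-sum sub-multiset of length
`exp(G)`, resp. `exp(H)`. As long as `s` elements remain, peel off a block of `exp(G)` elements
whose first coordinates sum to zero; this yields `t` disjoint blocks. Among the `t` sums of their
second coordinates, `exp(H)` sum to zero in `H`, and the union of these blocks has
`exp(G) · exp(H) = exp(G × H)` elements summing to zero. Splitting off one factor at a time gives
the bound for `G₁ × ⋯ × G_m`.
-/

open Multiset AddMonoid

theorem Multiset.exists_le_card_eq_s6 {α : Type*} {s : Multiset α} {n : ℕ} (h : n ≤ card s) :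
    ∃ t ≤ s, card t = n := by
  obtain ⟨t, ht⟩ := card_pos_iff_exists_mem.1
    (by rw [card_powersetCard]; exact Nat.choose_pos h : 0 < card (powersetCard n s))
  exact ⟨t, (mem_powersetCard.1 ht).1, (mem_powersetCard.1 ht).2⟩

theorem Multiset.exists_le_map_eq_of_le_map_s6 {α β : Type*} {f : α → β} {s : Multiset α}
    {t : Multiset β} (h : t ≤ s.map f) : ∃ u ≤ s, u.map f = t := by
  induction s using Quot.inductionOn
  induction t using Quot.inductionOn
  obtain ⟨l, hperm, hsub⟩ := h
  obtain ⟨u, hu, rfl⟩ := List.sublist_map_iff.1 hsub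
  exact ⟨u, hu.subperm, Quot.sound hperm⟩

theorem Multiset.join_mono {α : Type*} {S T : Multiset (Multiset α)} (h : S ≤ T) :
    S.join ≤ T.join := by
  obtain ⟨D, rfl⟩ := le_iff_exists_add.1 h
  rw [join_add]
  exact le_add_right _ _

theorem Multiset.sum_map_join {α M : Type*} [AddCommMonoid M] (f : α → M)
    (Ts : Multiset (Multiset α)) :
    (Ts.join.map f).sum = (Ts.map fun T => (T.map f).sum).sum := by
  simp only [map_join, sum_join, Multiset.map_map, Function.comp_def]

def EGZAdmissible (G : Type*) [AddCommMonoid G] (k : ℕ) : Prop :=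
  ∀ S : Multiset G, card S = k → ∃ T ≤ S, card T = exponent G ∧ T.sum = 0

section EGZAdmissible

variable {G H : Type*} [AddCommMonoid G] [AddCommMonoid H]

theorem EGZAdmissible.EGZ_le {k : ℕ} (hk : EGZAdmissible G k) : EGZ G ≤ k :=
  Nat.sInf_le hk

theorem EGZAdmissible.of_addEquiv (e : G ≃+ H) {k : ℕ} (hk : EGZAdmissible G k) :
    EGZAdmissible H k := by
  intro S hS
  obtain ⟨T, hTS, hTcard, hTsum⟩ := hk (S.map e.symm) (by rw [card_map, hS])
  refine ⟨T.map e, ?_, by rw [card_map, hTcard, exponent_eq_of_addEquiv e], by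
    rw [← map_multiset_sum, hTsum, _root_.map_zero]⟩
  simpa [map_map] using map_le_map (f := e) hTS

theorem egzAdmissible_exponent_mul_card [Finite G] :
    EGZAdmissible G (exponent G * Nat.card G) := by
  intro S hS
  have : Fintype G := Fintype.ofFinite G
  classical
  obtain ⟨g, -, hg⟩ : ∃ g ∈ (Finset.univ : Finset G), exponent G ≤ S.count g := by
    refine Finset.exists_le_of_sum_le Finset.univ_nonempty ?_
    rw [Finset.sum_const, Finset.card_univ, sum_count_eq_card fun a _ => Finset.mem_univ a, hS,
      smul_eq_mul, Nat.card_eq_fintype_card, mul_comm]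
  exact ⟨replicate (exponent G) g, le_count_iff_replicate_le.1 hg, card_replicate _ _, by
    rw [sum_replicate, exponent_nsmul_eq_zero]⟩

theorem egzAdmissible_EGZ [Finite G] : EGZAdmissible G (EGZ G) :=
  Nat.sInf_mem (s := {k | EGZAdmissible G k}) ⟨_, egzAdmissible_exponent_mul_card⟩

theorem EGZAdmissible.exists_zero_sum_blocks {α : Type*} {k : ℕ} (hk : EGZAdmissible G k)
    (f : α → G) (n : ℕ) {S : Multiset α} (hS : k + exponent G * n ≤ card S) :
    ∃ Ts : Multiset (Multiset α), card Ts = n ∧ Ts.join ≤ S ∧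
      ∀ T ∈ Ts, card T = exponent G ∧ (T.map f).sum = 0 := by
  classical
  induction n generalizing S with
  | zero => exact ⟨0, rfl, zero_le _, by simp⟩
  | succ n ih =>
    obtain ⟨S', hS'S, hS'⟩ := exists_le_card_eq_s6 (le_of_add_le_left hS)
    obtain ⟨fT, hfTS', hfT, hfTsum⟩ := hk (S'.map f) (by rw [card_map, hS'])
    obtain ⟨T, hTS', rfl⟩ := exists_le_map_eq_of_le_map_s6 hfTS'
    have hTS : T ≤ S := hTS'.trans hS'S
    rw [card_map] at hfT
    obtain ⟨Ts, hTs, hTsS, hblocks⟩ := ih (S := S - T) (by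
      rw [card_sub hTS, hfT]; rw [Nat.mul_succ] at hS; omega)
    refine ⟨T ::ₘ Ts, by rw [card_cons, hTs], ?_,
      forall_mem_cons.2 ⟨⟨hfT, hfTsum⟩, hblocks⟩⟩
    rw [join_cons]
    exact (le_tsub_iff_left hTS).1 hTsS

theorem EGZAdmissible.prod (hcop : (exponent G).Coprime (exponent H)) {kG kH : ℕ}
    (hG : EGZAdmissible G kG) (hH : EGZAdmissible H kH) :
    EGZAdmissible (G × H) (kG + exponent G * kH) := by
  intro S hS
  obtain ⟨Ts, hTs, hTsS, hblocks⟩ := hG.exists_zero_sum_blocks Prod.fst kH hS.ge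
  obtain ⟨W, hW, hWcard, hWsum⟩ :=
    hH (Ts.map fun T => (T.map Prod.snd).sum) (by rw [card_map, hTs])
  obtain ⟨Us, hUs, rfl⟩ := exists_le_map_eq_of_le_map_s6 hW
  rw [card_map] at hWcard
  refine ⟨Us.join, (join_mono hUs).trans hTsS, ?_, ?_⟩
  · rw [card_join, exponent_prod, lcm_eq_nat_lcm, hcop.lcm_eq_mul,
      Multiset.map_congr rfl fun T hT => (hblocks T (mem_of_le hUs hT)).1, map_const',
      sum_replicate, hWcard, smul_eq_mul, mul_comm]
  · refine Prod.ext ?_ ?_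
    · rw [fst_sum, sum_map_join, Prod.fst_zero]
      exact Multiset.sum_eq_zero fun x hx => by
        obtain ⟨T, hT, rfl⟩ := Multiset.mem_map.1 hx
        exact (hblocks T (mem_of_le hUs hT)).2
    · rw [snd_sum, sum_map_join, hWsum, Prod.snd_zero]

end EGZAdmissible

theorem Fin.sum_univ_succ_prod_filter_lt {R : Type*} [CommSemiring R] {n : ℕ}
    (a b : Fin (n + 1) → R) :
    ∑ i, (∏ j ∈ Finset.univ.filter (· < i), a j) * b i =
      b 0 + a 0 * ∑ i : Fin n, (∏ j ∈ Finset.univ.filter (· < i), a j.succ) * b i.succ := by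
  simp [Fin.sum_univ_succ, Finset.prod_filter, Fin.prod_univ_succ, Fin.succ_lt_succ_iff,
    Finset.mul_sum, mul_assoc]

theorem egzAdmissible_pi {m : ℕ} (Gi : Fin (m + 1) → Type*) [∀ i, AddCommMonoid (Gi i)]
    [∀ i, Finite (Gi i)]
    (hcop : ∀ i j, i ≠ j → (exponent (Gi i)).Coprime (exponent (Gi j))) :
    EGZAdmissible (∀ i, Gi i)
      (∑ i, (∏ j ∈ Finset.univ.filter (· < i), exponent (Gi j)) * EGZ (Gi i)) := by
  induction m with
  | zero =>
    simpa using egzAdmissible_EGZ.of_addEquiv (AddEquiv.piUnique (ι := Fin 1) Gi).symm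
  | succ m ih =>
    have hcop_tail : (exponent (Gi 0)).Coprime (exponent (∀ i : Fin (m + 1), Gi i.succ)) := by
      rw [exponent_pi]
      refine Nat.Coprime.coprime_dvd_right (Finset.lcm_dvd_prod _ _) ?_
      exact Nat.Coprime.prod_right fun i _ => hcop 0 i.succ (Fin.succ_ne_zero i).symm
    have htail := ih (fun i => Gi i.succ) fun i j hij => hcop _ _ (Fin.succ_injective _ |>.ne hij)
    rw [Fin.sum_univ_succ_prod_filter_lt]
    exact (egzAdmissible_EGZ.prod hcop_tail htail).of_addEquiv
      (Fin.consLinearEquiv ℕ Gi).toAddEquiv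

theorem stmt_6_general (m : ℕ) (G : Type*) [AddCommGroup G] [Nontrivial G]
    (Gi : Fin m → Type*) [∀ i, AddCommGroup (Gi i)] [∀ i, Finite (Gi i)]
    (e : G ≃+ ∀ i, Gi i)
    (hcop : ∀ i j, i ≠ j →
      Nat.Coprime (AddMonoid.exponent (Gi i)) (AddMonoid.exponent (Gi j))) :
    EGZ G ≤ ∑ i : Fin m,
      (∏ j ∈ Finset.univ.filter (fun j => j < i), AddMonoid.exponent (Gi j)) *
        EGZ (Gi i) := by
  cases m with
  | zero => exact (not_subsingleton G e.toEquiv.subsingleton).elim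
  | succ m => exact ((egzAdmissible_pi Gi hcop).of_addEquiv e.symm).EGZ_le

theorem stmt_6 (m : ℕ) (G : Type*) [AddCommGroup G] [Finite G] [Nontrivial G]
    (Gi : Fin m → Type*) [∀ i, AddCommGroup (Gi i)] [∀ i, Finite (Gi i)]
    (e : G ≃+ ∀ i, Gi i)
    (hcop : ∀ i j, i ≠ j →
      Nat.Coprime (AddMonoid.exponent (Gi i)) (AddMonoid.exponent (Gi j))) :
    EGZ G ≤ ∑ i : Fin m,
      (∏ j ∈ Finset.univ.filter (fun j => j < i), AddMonoid.exponent (Gi j)) *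
        EGZ (Gi i) :=
  stmt_6_general m G Gi e hcop
end

section
/- Let q ≥ 1, n ≥ 1, and d ≥ 0 be natural numbers. Then for every real x with 0 < x < 1, the number of vectors v ∈ {0, 1, …, q − 1}^n with Σ_{i=1}^n v_i ≤ d is at most ((1 − x^q)/(1 − x))^n · x^{−d}. -/
/-! Rankin's trick: for `0 < x ≤ 1` every `v` with `∑ i, v i ≤ d` has `x ^ d ≤ x ^ (∑ i, v i)`, so
`x ^ d` times the count is at most the sum of `x ^ (∑ i, v i)` over the whole box, which factors as
the `n`-th power of the geometric sum `1 + x + ⋯ + x ^ (q - 1) = (1 - x ^ q) / (1 - x)`. -/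

open Finset

theorem Finset.card_filter_weight_le_mul_pow_le_sum {α R : Type*} [Semiring R] [PartialOrder R]
    [IsOrderedRing R] (s : Finset α) (w : α → ℕ) (d : ℕ) {x : R} (hx0 : 0 ≤ x) (hx1 : x ≤ 1) :
    (#(s.filter fun a => w a ≤ d) : R) * x ^ d ≤ ∑ a ∈ s, x ^ w a := by
  calc (#(s.filter fun a => w a ≤ d) : R) * x ^ d
      = ∑ a ∈ s.filter (fun a => w a ≤ d), x ^ d := by rw [sum_const, nsmul_eq_mul]
    _ ≤ ∑ a ∈ s.filter (fun a => w a ≤ d), x ^ w a :=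
        sum_le_sum fun a ha => pow_le_pow_of_le_one hx0 hx1 (mem_filter.mp ha).2
    _ ≤ ∑ a ∈ s, x ^ w a :=
        sum_le_sum_of_subset_of_nonneg (filter_subset _ _) fun _ _ _ => pow_nonneg hx0 _

theorem Fintype.sum_piFinset_const_pow_sum {ι R : Type*} [Fintype ι] [DecidableEq ι]
    [CommSemiring R] (t : Finset ℕ) (x : R) :
    ∑ v ∈ Fintype.piFinset (fun _ : ι => t), x ^ (∑ i, v i) =
      (∑ k ∈ t, x ^ k) ^ Fintype.card ι := by
  simp_rw [← prod_pow_eq_pow_sum, ← prod_univ_sum, prod_const, card_univ]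

theorem geom_sum_eq_one_sub_div {K : Type*} [DivisionRing K] {x : K} (hx : x ≠ 1) (q : ℕ) :
    ∑ k ∈ range q, x ^ k = (1 - x ^ q) / (1 - x) := by
  simpa using geom_sum_Ico' hx (Nat.zero_le q)

theorem stmt_8_general (q n d : ℕ)
    (x : ℝ) (hx0 : 0 < x) (hx1 : x < 1) :
    ((((Fintype.piFinset fun _ : Fin n => Finset.range q)).filter
        (fun v : Fin n → ℕ => ∑ i, v i ≤ d)).card : ℝ) ≤
      ((1 - x ^ q) / (1 - x)) ^ n * x ^ (-(d : ℤ)) := by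
  have rankin := (Fintype.piFinset fun _ : Fin n => range q).card_filter_weight_le_mul_pow_le_sum
    (fun v => ∑ i, v i) d hx0.le hx1.le
  rw [Fintype.sum_piFinset_const_pow_sum, geom_sum_eq_one_sub_div hx1.ne, Fintype.card_fin]
    at rankin
  rwa [zpow_neg, zpow_natCast, ← div_eq_mul_inv, le_div_iff₀ (pow_pos hx0 d)]

theorem stmt_8 (q n d : ℕ) (hq : 1 ≤ q) (hn : 1 ≤ n)
    (x : ℝ) (hx0 : 0 < x) (hx1 : x < 1) :
    ((((Fintype.piFinset fun _ : Fin n => Finset.range q)).filter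
        (fun v : Fin n → ℕ => ∑ i, v i ≤ d)).card : ℝ) ≤
      ((1 - x ^ q) / (1 - x)) ^ n * x ^ (-(d : ℤ)) :=
  stmt_8_general q n d x hx0 hx1
end

section
/- Let X be a set, k ≥ 3, and x : Fin k → X. Define R_k(x) = Σ sgn(σ) · [x ∘ σ = x], where the sum in ℤ ranges over all permutations σ ∈ S_k whose cycle decomposition (counting fixed points as cycles, i.e., counting orbits on Fin k) has at least 3 cycles. Then: (i) R_k(x) = 1 if x₁, …, x_k are pairwise distinct; (ii) R_k(x) = (−1)^{k−1} · Σ_{j=2}^{k−1} (k−1)!/j if x₁ = ⋯ = x_k; (iii) R_k(x) = (−1)^{k−1} · #{σ ∈ S_k with exactly 2 orbits on Fin k such that x ∘ σ = x} if x₁, …, x_k take on exactly 2 distinct values; (iv) R_k(x) = 0 otherwise (i.e., if x takes at least 3 distinct values but is not injective). -/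
/-- The number of cycles of a permutation of `Fin k`, counting fixed points as cycles
(i.e. the number of orbits of `σ` on `Fin k`). -/
def orbitCount {k : ℕ} (σ : Equiv.Perm (Fin k)) : ℕ :=
  (Finset.univ.filter fun i => σ i = i).card + Multiset.card σ.cycleType

/-- `R_k(x) = ∑ sgn(σ) · [x ∘ σ = x]`, summed over permutations with at least 3 cycles. -/
def Rk {X : Type*} [DecidableEq X] {k : ℕ} (x : Fin k → X) : ℤ :=
  ∑ σ ∈ Finset.univ.filter (fun σ : Equiv.Perm (Fin k) => 3 ≤ orbitCount σ),
    (Equiv.Perm.sign σ : ℤ) * (if ∀ i, x (σ i) = x i then 1 else 0)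

/-!
Summed over all of `S_k`, `sgn σ · [x ∘ σ = x]` gives `1` for injective `x` and `0` otherwise:
left multiplication by a transposition of two points with equal values is a sign-reversing
involution of the stabiliser of `x`. So `R_k(x)` is minus the contribution of the permutations
with one or two cycles. Such a `σ` can fix `x` only if `x` takes at most that many values, its
sign is `(-1)^(k + #cycles)`, and the permutations of `Fin k` with `c` cycles are counted by the
Stirling number `s(k, c)`: `decomposeFin` inserts the new point either as a fixed point or into
an existing cycle. Finally `s(k, 1) = (k-1)!` and `s(k, 2) = ∑_{j < k} (k-1)!/j`.
-/

open Equiv Equiv.Perm Finset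

namespace Equiv.Perm

variable {α β : Type*}

theorem SameCycle.map_of_sameCycle_apply {σ : Perm α} {τ : Perm β} {f : α → β}
    (hf : ∀ a, τ.SameCycle (f a) (f (σ a))) {a b : α} (h : σ.SameCycle a b) :
    τ.SameCycle (f a) (f b) := by
  obtain ⟨z, rfl⟩ := h
  induction z using Int.induction_on with
  | zero => exact SameCycle.refl _ _
  | succ n ih =>
    rw [add_comm, zpow_add, zpow_one, mul_apply]
    exact ih.trans (hf _)
  | pred n ih =>
    rw [sub_eq_neg_add, zpow_add, zpow_neg_one, mul_apply]
    have := hf (σ⁻¹ ((σ ^ (-(n : ℤ))) a))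
    simp only [coe_inv, apply_symm_apply] at this
    exact ih.trans this.symm

theorem SameCycle.apply_eq_of_forall_comp_eq {X : Type*} {σ : Perm α} {x : α → X}
    (hx : ∀ a, x (σ a) = x a) {a b : α} (h : σ.SameCycle a b) : x a = x b :=
  sameCycle_one.1 (h.map_of_sameCycle_apply (τ := 1) fun a => by rw [hx])

variable [Fintype α]

theorem card_image_le_natCard_quotient_sameCycle {X : Type*} [DecidableEq X] {σ : Perm α}
    {x : α → X} (hx : ∀ a, x (σ a) = x a) :
    #(univ.image x) ≤ Nat.card (Quotient (SameCycle.setoid σ)) := by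
  classical
  let x' : Quotient (SameCycle.setoid σ) → X :=
    Quotient.lift x fun _ _ => SameCycle.apply_eq_of_forall_comp_eq hx
  have : univ.image x = univ.image x' := by
    ext v
    simp [x', Quotient.exists]
  rw [this, Nat.card_eq_fintype_card, ← card_univ]
  exact card_image_le

variable [DecidableEq α]

theorem natCard_quotient_sameCycle (σ : Perm α) :
    Nat.card (Quotient (SameCycle.setoid σ)) = #{a | σ a = a} + Multiset.card σ.cycleType := by
  let g : α → {a // σ a = a} ⊕ σ.cycleFactorsFinset := fun a =>
    if h : σ a = a then .inl ⟨a, h⟩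
    else .inr ⟨σ.cycleOf a, cycleOf_mem_cycleFactorsFinset_iff.2 (mem_support.2 h)⟩
  have hg : ∀ a b, g a = g b ↔ σ.SameCycle a b := by
    intro a b
    by_cases ha : σ a = a <;> by_cases hb : σ b = b <;> simp only [g, ha, hb, dite_true,
      dite_false, Sum.inl.injEq, Sum.inr.injEq, reduceCtorEq, Subtype.mk.injEq, false_iff]
    · exact ⟨fun h => h ▸ SameCycle.refl _ _, fun h => h.eq_of_left ha⟩
    · exact fun h => hb ((h.apply_eq_self_iff).1 ha)
    · exact fun h => ha ((h.apply_eq_self_iff).2 hb)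
    · refine ⟨fun h => ?_, SameCycle.cycleOf_eq⟩
      have hb' : b ∈ (σ.cycleOf a).support := h ▸ mem_support_cycleOf_iff.2
        ⟨SameCycle.refl _ _, mem_support.2 hb⟩
      exact (mem_support_cycleOf_iff.1 hb').1
  have hsurj : Function.Surjective g := by
    rintro (⟨a, ha⟩ | ⟨c, hc⟩)
    · exact ⟨a, by simp [g, ha]⟩
    · obtain ⟨a, ha⟩ := (mem_cycleFactorsFinset_iff.1 hc).1.nonempty_support
      have hσa : σ a ≠ a := by
        rwa [← (mem_cycleFactorsFinset_iff.1 hc).2 a ha, ← mem_support]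
      exact ⟨a, by simp [g, hσa, ← cycle_is_cycleOf ha hc]⟩
  rw [Nat.card_eq_of_bijective (Quotient.lift g fun a b h => (hg a b).2 h)
    ⟨fun p q => Quotient.inductionOn₂ p q fun a b h => Quotient.sound ((hg a b).1 h),
      (Quotient.lift_surjective_iff ..).2 hsurj⟩]
  simp [cycleType_def, Fintype.card_subtype]

theorem sign_eq_neg_one_pow (σ : Perm α) :
    (sign σ : ℤ) = (-1) ^ (Fintype.card α + #{a | σ a = a} + Multiset.card σ.cycleType) := by
  have hfix : #{a | σ a = a} + σ.cycleType.sum = Fintype.card α := by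
    rw [sum_cycleType, ← card_univ,
      ← card_filter_add_card_filter_not (s := univ) (fun a => σ a = a)]
    rfl
  rw [sign_of_cycleType, ← hfix]
  push_cast
  rw [show #{a | σ a = a} + σ.cycleType.sum + #{a | σ a = a} + Multiset.card σ.cycleType =
    σ.cycleType.sum + Multiset.card σ.cycleType + 2 * #{a | σ a = a} by ring,
    pow_add _ (_ + _), pow_mul, neg_one_sq, one_pow, mul_one]

theorem sum_sign_mul_ite_comp_eq {X : Type*} [DecidableEq X] (x : α → X) :
    ∑ σ : Perm α, (sign σ : ℤ) * (if ∀ a, x (σ a) = x a then 1 else 0) =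
      if Function.Injective x then 1 else 0 := by
  split_ifs with hx
  · rw [Fintype.sum_eq_single 1]
    · simp
    · intro σ hσ
      rw [if_neg, mul_zero]
      exact fun h => hσ (Equiv.ext fun a => hx (h a))
  · obtain ⟨a, b, hxab, hab⟩ := Function.not_injective_iff.1 hx
    set F : Perm α → ℤ := fun σ => (sign σ : ℤ) * (if ∀ a, x (σ a) = x a then 1 else 0)
    have hflip : ∀ σ, F (swap a b * σ) = -F σ := by
      intro σ
      have hx' : ∀ i, x (swap a b i) = x i := fun i => by
        rw [swap_apply_def]; split_ifs <;> simp_all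
      simp only [F, sign_mul, sign_swap hab, mul_apply, hx']
      push_cast; ring
    have hneg := Fintype.sum_equiv (Equiv.mulLeft (swap a b)) F (fun σ => -F σ)
      (fun σ => by simp [hflip])
    rw [sum_neg_distrib] at hneg
    linarith

end Equiv.Perm

section Fin

variable {n k : ℕ}

theorem orbitCount_eq_natCard_quotient (σ : Perm (Fin k)) :
    orbitCount σ = Nat.card (Quotient (SameCycle.setoid σ)) :=
  (natCard_quotient_sameCycle σ).symm

theorem sign_eq_neg_one_pow_add_orbitCount (σ : Perm (Fin k)) :
    (sign σ : ℤ) = (-1) ^ (k + orbitCount σ) := by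
  rw [sign_eq_neg_one_pow, Fintype.card_fin, add_assoc]
  rfl

theorem sameCycle_decomposeFin_symm_succ_iff (p : Fin (n + 1)) (e : Perm (Fin n)) (i j : Fin n) :
    (decomposeFin.symm (p, e)).SameCycle i.succ j.succ ↔ e.SameCycle i j := by
  set σ := decomposeFin.symm (p, e)
  constructor
  · intro h
    -- `π` gives `0` the value `π p`, so `π ∘ swap 0 p = π` and `π` intertwines `σ` with `e`
    let π : Fin (n + 1) → Fin n := Fin.cases (Fin.cases i id p) id
    have hπp : π p = π 0 := by cases p using Fin.cases <;> rfl
    have hπswap : ∀ z, π (swap 0 p z) = π z := by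
      intro z
      rw [swap_apply_def]
      split_ifs with h1 h2
      · rw [h1, hπp]
      · rw [h2, hπp]
      · rfl
    have hπσ : ∀ y, e.SameCycle (π y) (π (σ y)) := by
      intro y
      cases y using Fin.cases with
      | zero => rw [decomposeFin_symm_apply_zero, hπp]
      | succ a =>
        rw [decomposeFin_symm_apply_succ, hπswap]
        exact ⟨1, rfl⟩
    exact h.map_of_sameCycle_apply hπσ
  · refine SameCycle.map_of_sameCycle_apply fun a => ?_
    -- `σ` sends `a.succ` to `(e a).succ`, or to `0` and then to `p = (e a).succ`
    by_cases hp : (e a).succ = p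
    · have h0 : σ a.succ = 0 := by rw [decomposeFin_symm_apply_succ, hp, swap_apply_right]
      exact ⟨2, by rw [zpow_two, mul_apply, h0, decomposeFin_symm_apply_zero, hp]⟩
    · exact ⟨1, by rw [zpow_one, decomposeFin_symm_apply_succ,
        swap_apply_of_ne_of_ne (Fin.succ_ne_zero _) hp]⟩


theorem orbitCount_decomposeFin_symm_zero (e : Perm (Fin n)) :
    orbitCount (decomposeFin.symm (0, e)) = orbitCount e + 1 := by
  set σ := decomposeFin.symm (0, e)
  have hσ0 : σ 0 = 0 := decomposeFin_symm_apply_zero 0 e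
  let ι : Option (Quotient (SameCycle.setoid e)) → Quotient (SameCycle.setoid σ) :=
    fun o => o.elim ⟦0⟧ (Quotient.map' Fin.succ fun i j =>
      (sameCycle_decomposeFin_symm_succ_iff 0 e i j).2)
  have hι : Function.Bijective ι := by
    refine ⟨?_, fun q => ?_⟩
    · rintro (_ | ⟨⟨i⟩⟩) (_ | ⟨⟨j⟩⟩) h
      · rfl
      · exact absurd ((Quotient.exact h).eq_of_left hσ0) (Fin.succ_ne_zero j).symm
      · exact absurd ((Quotient.exact h).symm.eq_of_left hσ0) (Fin.succ_ne_zero i).symm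
      · exact congrArg some (Quotient.sound
          ((sameCycle_decomposeFin_symm_succ_iff 0 e i j).1 (Quotient.exact h)))
    · induction q using Quotient.inductionOn with | h y => ?_
      cases y using Fin.cases with
      | zero => exact ⟨none, rfl⟩
      | succ i => exact ⟨some ⟦i⟧, rfl⟩
  rw [orbitCount_eq_natCard_quotient, orbitCount_eq_natCard_quotient, ← Finite.card_option,
    Nat.card_eq_of_bijective ι hι]

theorem orbitCount_decomposeFin_symm_succ (q : Fin n) (e : Perm (Fin n)) :
    orbitCount (decomposeFin.symm (q.succ, e)) = orbitCount e := by
  set σ := decomposeFin.symm (q.succ, e)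
  let ι : Quotient (SameCycle.setoid e) → Quotient (SameCycle.setoid σ) :=
    Quotient.map' Fin.succ fun i j => (sameCycle_decomposeFin_symm_succ_iff q.succ e i j).2
  have hι : Function.Bijective ι := by
    refine ⟨fun a b => Quotient.inductionOn₂ a b fun i j h => Quotient.sound
      ((sameCycle_decomposeFin_symm_succ_iff q.succ e i j).1 (Quotient.exact h)), fun c => ?_⟩
    induction c using Quotient.inductionOn with | h y => ?_
    cases y using Fin.cases with
    | zero =>
      refine ⟨⟦q⟧, Quotient.sound ?_⟩
      show σ.SameCycle q.succ 0
      exact ⟨-1, by rw [zpow_neg_one, inv_eq_iff_eq, decomposeFin_symm_apply_zero]⟩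
    | succ i => exact ⟨⟦i⟧, rfl⟩
  rw [orbitCount_eq_natCard_quotient, orbitCount_eq_natCard_quotient,
    Nat.card_eq_of_bijective ι hι]

theorem card_filter_orbitCount_eq_stirlingFirst (n c : ℕ) :
    #{σ : Perm (Fin n) | orbitCount σ = c} = Nat.stirlingFirst n c := by
  induction n generalizing c with
  | zero =>
    rw [univ_unique, filter_singleton]
    cases c <;> simp [orbitCount]
  | succ n ih =>
    rw [univ_perm_fin_succ, filter_map, card_map, ← univ_product_univ, card_filter,
      sum_product, Fin.sum_univ_succ]
    simp only [Function.comp_apply, Equiv.coe_toEmbedding, orbitCount_decomposeFin_symm_zero,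
      orbitCount_decomposeFin_symm_succ, ← card_filter, ih, sum_const, card_univ,
      Fintype.card_fin, smul_eq_mul]
    cases c with
    | zero => cases n <;> simp
    | succ c => simp [Nat.stirlingFirst_succ_succ, add_comm, ih]

end Fin

theorem Nat.stirlingFirst_succ_two (n : ℕ) :
    Nat.stirlingFirst (n + 1) 2 = ∑ j ∈ Icc 1 n, n.factorial / j := by
  induction n with
  | zero => rfl
  | succ n ih =>
    rw [Nat.stirlingFirst_succ_succ, ih, Nat.stirlingFirst_one_right, mul_sum,
      sum_Icc_succ_top (by omega), Nat.factorial_succ, Nat.mul_div_cancel_left _ n.succ_pos]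
    congr 1
    refine sum_congr rfl fun j hj => ?_
    rw [Nat.mul_div_assoc _ (Nat.dvd_factorial (mem_Icc.1 hj).1 (mem_Icc.1 hj).2)]

section Rk

variable {X : Type*} [DecidableEq X] {k : ℕ}

theorem Rk_add_sum_range_three (x : Fin k → X) :
    Rk x + ∑ c ∈ range 3, (-1) ^ (k + c) *
      (#{σ : Perm (Fin k) | orbitCount σ = c ∧ ∀ i, x (σ i) = x i} : ℤ) =
      if Function.Injective x then 1 else 0 := by
  rw [← sum_sign_mul_ite_comp_eq x, ← sum_filter_add_sum_filter_not univ
    (fun σ : Perm (Fin k) => 3 ≤ orbitCount σ)]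
  congr 1
  · -- the two sides differ only in the `Decidable` instance of `∀ i, x (σ i) = x i`
    unfold Rk
    congr!
  have hfiber : ∀ c ∈ range 3, (-1) ^ (k + c) *
      (#{σ : Perm (Fin k) | orbitCount σ = c ∧ ∀ i, x (σ i) = x i} : ℤ) =
      ∑ σ ∈ {σ : Perm (Fin k) | ¬3 ≤ orbitCount σ ∧ ∀ i, x (σ i) = x i} with orbitCount σ = c,
        (sign σ : ℤ) := by
    intro c hc
    have hfilter : filter (fun σ => orbitCount σ = c)
        (filter (fun σ : Perm (Fin k) => ¬3 ≤ orbitCount σ ∧ ∀ i, x (σ i) = x i) univ) =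
        filter (fun σ => orbitCount σ = c ∧ ∀ i, x (σ i) = x i) univ := by
      ext σ
      simp only [mem_filter, mem_univ, true_and]
      constructor
      · rintro ⟨⟨-, h⟩, rfl⟩
        exact ⟨rfl, h⟩
      · rintro ⟨rfl, h⟩
        exact ⟨⟨by simpa using hc, h⟩, rfl⟩
    rw [hfilter, sum_congr rfl fun σ hσ => by
      rw [sign_eq_neg_one_pow_add_orbitCount, (mem_filter.1 hσ).2.1], sum_const, nsmul_eq_mul,
      mul_comm]
  rw [sum_congr rfl hfiber, sum_fiberwise_of_maps_to, ← filter_filter, sum_filter]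
  · exact sum_congr rfl fun σ _ => by split_ifs <;> simp
  · intro σ hσ
    simpa using (mem_filter.1 hσ).2.1

theorem card_filter_orbitCount_eq_and_invariant_of_lt {x : Fin k → X} {c : ℕ}
    (hc : c < #(univ.image x)) :
    #{σ : Perm (Fin k) | orbitCount σ = c ∧ ∀ i, x (σ i) = x i} = 0 := by
  rw [card_eq_zero, filter_eq_empty_iff]
  rintro σ - ⟨rfl, hσ⟩
  rw [orbitCount_eq_natCard_quotient] at hc
  exact (card_image_le_natCard_quotient_sameCycle hσ).not_gt hc

end Rk

theorem stmt_10 (X : Type*) [DecidableEq X] (k : ℕ) (hk : 3 ≤ k) (x : Fin k → X) :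
    (Function.Injective x → Rk x = 1) ∧
    ((∀ i j, x i = x j) →
      Rk x = (-1) ^ (k - 1) *
        ∑ j ∈ Finset.Icc 2 (k - 1), ((k - 1).factorial / j : ℕ)) ∧
    ((Finset.univ.image x).card = 2 →
      Rk x = (-1) ^ (k - 1) *
        ((Finset.univ.filter (fun σ : Equiv.Perm (Fin k) =>
          orbitCount σ = 2 ∧ ∀ i, x (σ i) = x i)).card : ℤ)) ∧
    (¬Function.Injective x → 3 ≤ (Finset.univ.image x).card → Rk x = 0) := by
  obtain ⟨m, rfl⟩ : ∃ m, k = m + 3 := ⟨k - 3, by omega⟩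
  have key := Rk_add_sum_range_three x
  simp only [sum_range_succ, sum_range_zero, zero_add] at key
  have hvanish := fun c (hc : c < #(univ.image x)) =>
    card_filter_orbitCount_eq_and_invariant_of_lt (k := m + 3) hc
  refine ⟨fun hx => ?_, fun hx => ?_, fun hx => ?_, fun hx h3 => ?_⟩
  · have h3 : #(univ.image x) = m + 3 := by rw [card_image_of_injective _ hx, card_fin]
    rw [hvanish 0 (by omega), hvanish 1 (by omega), hvanish 2 (by omega), if_pos hx] at key
    simpa using key
  · have hx' : ¬Function.Injective x := fun h => by simpa using h (hx 0 1)
    have hinv : ∀ (σ : Perm (Fin (m + 3))) i, x (σ i) = x i := fun _ _ => hx _ _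
    simp only [hinv, implies_true, and_true, card_filter_orbitCount_eq_stirlingFirst, if_neg hx',
      Nat.stirlingFirst_succ_zero (m + 2), Nat.stirlingFirst_one_right (m + 2),
      Nat.stirlingFirst_succ_two (m + 2)] at key
    rw [← insert_Icc_add_one_left_eq_Icc (by omega : 1 ≤ m + 2), sum_insert (by simp),
      Nat.div_one] at key
    rw [show m + 3 - 1 = m + 2 by omega]
    push_cast at key ⊢
    linear_combination key
  · have hx' : ¬Function.Injective x := fun h => by
      rw [card_image_of_injective _ h, card_fin] at hx; omega
    rw [hvanish 0 (by omega), hvanish 1 (by omega), if_neg hx'] at key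
    rw [show m + 3 - 1 = m + 2 by omega]
    linear_combination key
  · rw [hvanish 0 (by omega), hvanish 1 (by omega), hvanish 2 (by omega), if_neg hx] at key
    simpa using key
end
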